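/- Fix i ∈ {1,…,N}. Let (ξ_1,…,ξ_N) be a tangent solution with ξ_i nowhere vanishing, (H_1,…,H_N) a Lamé solution, and Ω : ℤ^N → ℝ a potential satisfying Δ_k Ω = ξ_k·(T_k H_k) for all k = 1,…,N. Define H_i[1] := −Ω/ξ_i, H_k[1] := H_k − Q_{ik}·Ω/ξ_i for k ≠ i, and Q_{ik}[1] := (ξ_i·Δ_i Q_{ik} − Q_{ik}·Δ_i ξ_i)/ξ_i for k ≠ i. Then for every k ≠ i: Δ_i H_k[1] = Q_{ik}[1]·(T_i H_i[1]). -/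

import Mathlib

noncomputable section

/-- Shift operator `T_j`: `(T_j f)(n) = f(n + e_j)`. -/
def T {N : ℕ} (j : Fin N) (f : (Fin N → ℤ) → ℝ) : (Fin N → ℤ) → ℝ :=
  fun n => f (n + Pi.single j 1)

/-- Difference operator `Δ_j = T_j − 1`. -/
def Δ {N : ℕ} (j : Fin N) (f : (Fin N → ℤ) → ℝ) : (Fin N → ℤ) → ℝ :=
  fun n => f (n + Pi.single j 1) - f n

section Calculus

variable {N : ℕ} (j : Fin N)

lemma Δ_sub (f g : (Fin N → ℤ) → ℝ) : Δ j (f - g) = Δ j f - Δ j g := by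
  funext n
  simp only [Δ, Pi.sub_apply]
  ring

lemma T_neg (f : (Fin N → ℤ) → ℝ) : T j (-f) = -T j f := rfl

lemma Δ_mul (f g : (Fin N → ℤ) → ℝ) : Δ j (f * g) = Δ j f * T j g + f * Δ j g := by
  funext n
  simp only [Δ, T, Pi.mul_apply, Pi.add_apply]
  ring

lemma Δ_div {f g : (Fin N → ℤ) → ℝ} (hg : ∀ n, g n ≠ 0) :
    Δ j (f / g) = (Δ j f - T j (f / g) * Δ j g) / g := by
  funext n
  have := hg n
  have := hg (n + Pi.single j 1)
  simp only [Δ, T, Pi.div_apply, Pi.mul_apply, Pi.sub_apply]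
  field_simp
  ring

end Calculus

-- Expanding `Δ_j (ω / x)` by the quotient rule, the `T_j h` terms of `Δ_j f` and
-- `Δ_j (q ω / x)` cancel.
theorem Δ_sub_mul_div_eq_of_potential {N : ℕ} (j : Fin N) {f q h ω x : (Fin N → ℤ) → ℝ}
    (hf : Δ j f = q * T j h) (hω : Δ j ω = x * T j h) (hx : ∀ n, x n ≠ 0) :
    Δ j (f - q * ω / x) = ((x * Δ j q - q * Δ j x) / x) * T j (-(ω / x)) := by
  have hωx : Δ j (ω / x) = T j h - T j (ω / x) * Δ j x / x := by
    rw [Δ_div j hx, hω]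
    funext n
    have := hx n
    simp only [Pi.div_apply, Pi.mul_apply, Pi.sub_apply]
    field_simp
  rw [mul_div_assoc, Δ_sub, Δ_mul, hf, hωx, T_neg]
  funext n
  have := hx n
  simp only [Pi.div_apply, Pi.mul_apply, Pi.sub_apply, Pi.add_apply, Pi.neg_apply]
  field_simp
  ring

theorem statement_7_general (N : ℕ)
    (Q : Fin N → Fin N → (Fin N → ℤ) → ℝ)
    (i : Fin N)
    (ξ H : Fin N → (Fin N → ℤ) → ℝ)
    (hH : ∀ j k : Fin N, j ≠ k → Δ j (H k) = Q j k * T j (H j))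
    (hξi : ∀ n : Fin N → ℤ, ξ i n ≠ 0)
    (Ω : (Fin N → ℤ) → ℝ)
    (hΩ : ∀ k : Fin N, Δ k Ω = ξ k * T k (H k)) :
    ∀ k : Fin N, k ≠ i →
      Δ i (H k - Q i k * Ω / ξ i)
        = ((ξ i * Δ i (Q i k) - Q i k * Δ i (ξ i)) / ξ i) * T i (-(Ω / ξ i)) :=
  fun k hk => Δ_sub_mul_div_eq_of_potential i (hH i k hk.symm) (hΩ i) hξi

/-- Levy transformation in the `i`-th direction, Lamé coefficients: for every `k ≠ i`,
`Δ_i H_k[1] = Q_{ik}[1]·(T_i H_i[1])` with `H_i[1] = −Ω/ξ_i`,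
`H_k[1] = H_k − Q_{ik}·Ω/ξ_i` and `Q_{ik}[1] = (ξ_i Δ_i Q_{ik} − Q_{ik} Δ_i ξ_i)/ξ_i`,
where `Ω` is the potential with `Δ_k Ω = ξ_k·(T_k H_k)`. -/
theorem statement_7 (N : ℕ) (hN : 2 ≤ N)
    (Q : Fin N → Fin N → (Fin N → ℤ) → ℝ)
    (i : Fin N)
    (ξ H : Fin N → (Fin N → ℤ) → ℝ)
    (hξ : ∀ j k : Fin N, j ≠ k → Δ k (ξ j) = T k (Q j k) * ξ k)
    (hH : ∀ j k : Fin N, j ≠ k → Δ j (H k) = Q j k * T j (H j))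
    (hξi : ∀ n : Fin N → ℤ, ξ i n ≠ 0)
    (Ω : (Fin N → ℤ) → ℝ)
    (hΩ : ∀ k : Fin N, Δ k Ω = ξ k * T k (H k)) :
    ∀ k : Fin N, k ≠ i →
      Δ i (H k - Q i k * Ω / ξ i)
        = ((ξ i * Δ i (Q i k) - Q i k * Δ i (ξ i)) / ξ i) * T i (-(Ω / ξ i)) :=
  statement_7_general N Q i ξ H hH hξi Ω hΩ
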